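/- arXiv:2010.12365 — 4 statements merged into one kernel-verified Lean document; each statement's English description precedes it below -/
import Mathlib

section
/- Let E be a finite-dimensional real inner product space, let a^1,…,a^m ∈ E be a finite family of generators, let A_c = co{a^1,…,a^m} be their convex hull and K(A) = {∑_{i=1}^m u_i a^i : u_i ≥ 0} their conical hull. Let b ∈ E and ρ > 0. Suppose b^ρ ∈ ρA_c satisfies ‖b^ρ − b‖ ≤ ‖x − b‖ for all x ∈ ρA_c, suppose b^K ∈ K(A) satisfies ‖b^K − b‖ ≤ ‖x − b‖ for all x ∈ K(A), and suppose b^{co} ∈ co({0} ∪ ρA_c) satisfies ‖b^{co} − b‖ ≤ ‖x − b‖ for all x ∈ co({0} ∪ ρA_c). If ‖b^ρ‖² > ⟨b, b^ρ⟩, then b^K = b^{co}. -/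
open scoped RealInnerProductSpace Pointwise

/-! Write `T = co({0} ∪ ρ • Ac)` and let `bco` be the projection of `b` onto `T`. Every point of
`T` is `q • z` with `z ∈ ρ • Ac` and `0 ≤ q ≤ 1`; for `bco = q • z`, the variational inequality
at `0` and at `z` forces `⟪b - bco, bco⟫ = 0` unless `q = 1`, i.e. unless `bco = bρ`, which the
hypothesis `‖bρ‖² > ⟪b, bρ⟫` excludes. Orthogonality turns the variational inequality on `T` into
`⟪b - bco, y⟫ ≤ 0` on `ρ • Ac`, hence on the generators and on all of `K(A)`; so `bco ∈ T ⊆ K(A)`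
satisfies the variational inequality of the projection onto `K(A)`, and equals `bK`. -/

theorem exists_eq_smul_of_mem_convexHull_insert_zero {F : Type*} [AddCommGroup F] [Module ℝ F]
    {C : Set F} (hC : Convex ℝ C) (hne : C.Nonempty) {x : F}
    (hx : x ∈ convexHull ℝ (insert 0 C)) : ∃ q ∈ Set.Icc (0 : ℝ) 1, ∃ z ∈ C, x = q • z := by
  rw [convexHull_insert hne, hC.convexHull_eq, convexJoin_singleton_left, Set.mem_iUnion₂] at hx
  obtain ⟨z, hz, p, q, hp, hq, hpq, rfl⟩ := hx
  exact ⟨q, ⟨hq, by linarith⟩, z, hz, by rw [smul_zero, zero_add]⟩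

section InnerProductSpace

variable {E : Type*} [NormedAddCommGroup E] [InnerProductSpace ℝ E] {S : Set E} {b v w : E}

theorem inner_sub_nonpos_of_forall_norm_sub_le (hS : Convex ℝ S) (hv : v ∈ S)
    (hmin : ∀ x ∈ S, ‖v - b‖ ≤ ‖x - b‖) {z : E} (hz : z ∈ S) : ⟪b - v, z - v⟫ ≤ 0 := by
  have : Nonempty S := ⟨⟨v, hv⟩⟩
  refine (norm_eq_iInf_iff_real_inner_le_zero hS hv).mp (le_antisymm ?_ ?_) z hz
  · exact le_ciInf fun x ↦ by simpa only [norm_sub_rev b] using hmin x x.2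
  · exact ciInf_le ⟨0, Set.forall_mem_range.2 fun _ ↦ norm_nonneg _⟩ (⟨v, hv⟩ : S)

theorem eq_of_inner_sub_nonpos_of_norm_sub_le (hvi : ⟪b - v, w - v⟫ ≤ 0)
    (hw : ‖w - b‖ ≤ ‖v - b‖) : w = v := by
  have hpyth : ‖w - b‖ ^ 2 = ‖w - v‖ ^ 2 - 2 * ⟪b - v, w - v⟫ + ‖v - b‖ ^ 2 := by
    rw [show w - b = (w - v) - (b - v) by abel, norm_sub_sq_real, real_inner_comm,
      norm_sub_rev b v]
  have hsq : ‖w - b‖ ^ 2 ≤ ‖v - b‖ ^ 2 := pow_le_pow_left₀ (norm_nonneg _) hw 2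
  have hzero : ‖w - v‖ ^ 2 = 0 := le_antisymm (by nlinarith) (sq_nonneg _)
  exact sub_eq_zero.mp (norm_eq_zero.mp (pow_eq_zero_iff two_ne_zero |>.mp hzero))

theorem inner_sub_self_eq_zero_of_forall_norm_sub_le_convexHull_insert_zero {C : Set E}
    (hC : Convex ℝ C) {b p v : E} (hp : p ∈ C) (hpmin : ∀ x ∈ C, ‖p - b‖ ≤ ‖x - b‖)
    (hp_obtuse : ⟪b - p, p⟫ < 0) (hv : v ∈ convexHull ℝ (insert 0 C))
    (hvmin : ∀ x ∈ convexHull ℝ (insert 0 C), ‖v - b‖ ≤ ‖x - b‖) : ⟪b - v, v⟫ = 0 := by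
  have hvi : ∀ z ∈ convexHull ℝ (insert 0 C), ⟪b - v, z - v⟫ ≤ 0 := fun _ ↦
    inner_sub_nonpos_of_forall_norm_sub_le (convex_convexHull ℝ _) hv hvmin
  have hCsub : C ⊆ convexHull ℝ (insert 0 C) :=
    (Set.subset_insert _ _).trans (subset_convexHull ℝ _)
  have h0 : 0 ≤ ⟪b - v, v⟫ := by
    simpa [inner_neg_right] using hvi 0 (subset_convexHull ℝ _ (Set.mem_insert _ _))
  obtain ⟨q, ⟨hq0, hq1⟩, z, hz, rfl⟩ := exists_eq_smul_of_mem_convexHull_insert_zero hC ⟨p, hp⟩ hv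
  rcases hq1.lt_or_eq with hq1 | rfl
  · have hz_vi : (1 - q) * ⟪b - q • z, z⟫ ≤ 0 := by
      simpa only [show z - q • z = (1 - q) • z by module, real_inner_smul_right]
        using hvi z (hCsub hz)
    have hz_nonpos : ⟪b - q • z, z⟫ ≤ 0 := nonpos_of_mul_nonpos_right hz_vi (by linarith)
    rw [real_inner_smul_right] at h0 ⊢
    exact le_antisymm (mul_nonpos_of_nonneg_of_nonpos hq0 hz_nonpos) h0
  · rw [one_smul] at h0 hvmin ⊢
    have hzp : z = p := eq_of_inner_sub_nonpos_of_norm_sub_le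
      (inner_sub_nonpos_of_forall_norm_sub_le hC hp hpmin hz) (hvmin p (hCsub hp))
    subst hzp
    exact absurd h0 (not_le.mpr hp_obtuse)

theorem coe_hull_range_eq {ι : Type*} [Fintype ι] (a : ι → E) :
    (PointedCone.hull ℝ (Set.range a) : Set E) =
      {x | ∃ u : ι → ℝ, (∀ i, 0 ≤ u i) ∧ x = ∑ i, u i • a i} := by
  ext x
  simp only [SetLike.mem_coe, Submodule.mem_span_range_iff_exists_fun, Set.mem_ofPred_eq]
  constructor
  · rintro ⟨c, rfl⟩
    exact ⟨fun i ↦ c i, fun i ↦ (c i).2, by simp⟩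
  · rintro ⟨u, hu, rfl⟩
    exact ⟨fun i ↦ ⟨u i, hu i⟩, by simp⟩

theorem inner_sum_smul_nonpos {ι : Type*} [Fintype ι] {c : E} {a : ι → E} {u : ι → ℝ}
    (hu : ∀ i, 0 ≤ u i) (ha : ∀ i, ⟪c, a i⟫ ≤ 0) : ⟪c, ∑ i, u i • a i⟫ ≤ 0 := by
  rw [inner_sum]
  exact Finset.sum_nonpos fun i _ ↦ by
    rw [real_inner_smul_right]; exact mul_nonpos_of_nonneg_of_nonpos (hu i) (ha i)

end InnerProductSpace

theorem cone_truncation_equiv_general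
    {E : Type*} [NormedAddCommGroup E] [InnerProductSpace ℝ E]
    {m : ℕ} (a : Fin m → E)
    (Ac : Set E) (hAc : Ac = convexHull ℝ (Set.range a))
    (K : Set E)
    (hK : K = {x : E | ∃ u : Fin m → ℝ, (∀ i, 0 ≤ u i) ∧ x = ∑ i, u i • a i})
    (b : E) (ρ : ℝ) (hρ : 0 < ρ)
    (bρ : E) (hbρ_mem : bρ ∈ ρ • Ac)
    (hbρ_min : ∀ x ∈ ρ • Ac, ‖bρ - b‖ ≤ ‖x - b‖)
    (bK : E) (hbK_mem : bK ∈ K)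
    (hbK_min : ∀ x ∈ K, ‖bK - b‖ ≤ ‖x - b‖)
    (bco : E) (hbco_mem : bco ∈ convexHull ℝ ({(0 : E)} ∪ ρ • Ac))
    (hbco_min : ∀ x ∈ convexHull ℝ ({(0 : E)} ∪ ρ • Ac), ‖bco - b‖ ≤ ‖x - b‖)
    (hcond : ‖bρ‖ ^ 2 > ⟪b, bρ⟫) :
    bK = bco := by
  rw [Set.singleton_union] at hbco_mem hbco_min
  set Kc := PointedCone.hull ℝ (Set.range a)
  have hKc : K = Kc := hK.trans (coe_hull_range_eq a).symm
  have hAcK : Ac ⊆ Kc := hAc ▸ convexHull_min PointedCone.subset_hull Kc.convex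
  have hTK : convexHull ℝ (insert 0 (ρ • Ac)) ⊆ K := hKc ▸ convexHull_min
    (Set.insert_subset Kc.zero_mem (Set.smul_set_subset_iff.mpr fun x hx ↦
      Kc.smul_mem hρ.le (hAcK hx))) Kc.convex
  have horth : ⟪b - bco, bco⟫ = 0 :=
    inner_sub_self_eq_zero_of_forall_norm_sub_le_convexHull_insert_zero
      ((hAc ▸ convex_convexHull ℝ _ : Convex ℝ Ac).smul ρ) hbρ_mem hbρ_min
      (by rw [inner_sub_left, real_inner_self_eq_norm_sq]; linarith) hbco_mem hbco_min
  have hgen : ∀ i, ⟪b - bco, a i⟫ ≤ 0 := fun i ↦ by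
    have hvi := inner_sub_nonpos_of_forall_norm_sub_le (convex_convexHull ℝ _) hbco_mem hbco_min
      (subset_convexHull ℝ _ (Set.mem_insert_of_mem _
        (Set.smul_mem_smul_set (hAc ▸ subset_convexHull ℝ _ ⟨i, rfl⟩ : a i ∈ Ac))))
    rw [inner_sub_right, horth, sub_zero, real_inner_smul_right] at hvi
    exact nonpos_of_mul_nonpos_right hvi hρ
  refine eq_of_inner_sub_nonpos_of_norm_sub_le ?_ (hbK_min bco (hTK hbco_mem))
  obtain ⟨u, hu, rfl⟩ := hK ▸ hbK_mem
  rw [inner_sub_right, horth, sub_zero]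
  exact inner_sum_smul_nonpos hu hgen

/-- Theorem 1 of the paper: if the projection `bρ` of `b` onto the scaled polytope
`ρ • Ac` satisfies `‖bρ‖² > ⟪b, bρ⟫`, then the projection of `b` onto the cone `K(A)`
coincides with the projection of `b` onto the truncated cone `co({0} ∪ ρ • Ac)`. -/
theorem cone_truncation_equiv
    {E : Type*} [NormedAddCommGroup E] [InnerProductSpace ℝ E] [FiniteDimensional ℝ E]
    {m : ℕ} (a : Fin m → E)
    (Ac : Set E) (hAc : Ac = convexHull ℝ (Set.range a))
    (K : Set E)
    (hK : K = {x : E | ∃ u : Fin m → ℝ, (∀ i, 0 ≤ u i) ∧ x = ∑ i, u i • a i})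
    (b : E) (ρ : ℝ) (hρ : 0 < ρ)
    (bρ : E) (hbρ_mem : bρ ∈ ρ • Ac)
    (hbρ_min : ∀ x ∈ ρ • Ac, ‖bρ - b‖ ≤ ‖x - b‖)
    (bK : E) (hbK_mem : bK ∈ K)
    (hbK_min : ∀ x ∈ K, ‖bK - b‖ ≤ ‖x - b‖)
    (bco : E) (hbco_mem : bco ∈ convexHull ℝ ({(0 : E)} ∪ ρ • Ac))
    (hbco_min : ∀ x ∈ convexHull ℝ ({(0 : E)} ∪ ρ • Ac), ‖bco - b‖ ≤ ‖x - b‖)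
    (hcond : ‖bρ‖ ^ 2 > ⟪b, bρ⟫) :
    bK = bco :=
  cone_truncation_equiv_general a Ac hAc K hK b ρ hρ bρ hbρ_mem hbρ_min bK hbK_mem hbK_min bco
    hbco_mem hbco_min hcond
end

section
/- Let E be a finite-dimensional real inner product space, let a^1,…,a^m ∈ E be a finite family of generators with convex hull A_c = co{a^1,…,a^m}, and assume 0 ∉ A_c. Let a^{co} ∈ A_c satisfy ‖a^{co}‖ ≤ ‖x‖ for all x ∈ A_c, and set d_A = ‖a^{co}‖ (so d_A > 0). Let b ∈ E and let ρ > ‖b‖/d_A. If b^ρ ∈ ρA_c satisfies ‖b^ρ − b‖ ≤ ‖x − b‖ for all x ∈ ρA_c, then ‖b^ρ‖ > ‖b‖ and ‖b^ρ‖² > ⟨b, b^ρ⟩. -/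
open scoped RealInnerProductSpace Pointwise

theorem mul_le_norm_of_mem_smul_set {𝕜 E : Type*} [NormedField 𝕜] [SeminormedAddCommGroup E]
    [NormedSpace 𝕜 E] {s : Set E} {d : ℝ} (hs : ∀ x ∈ s, d ≤ ‖x‖) {c : 𝕜} {y : E}
    (hy : y ∈ c • s) : ‖c‖ * d ≤ ‖y‖ := by
  obtain ⟨x, hx, rfl⟩ := hy
  rw [norm_smul]
  exact mul_le_mul_of_nonneg_left (hs x hx) (norm_nonneg c)

theorem real_inner_lt_norm_sq_of_norm_lt {E : Type*} [NormedAddCommGroup E]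
    [InnerProductSpace ℝ E] {x y : E} (h : ‖x‖ < ‖y‖) : ⟪x, y⟫ < ‖y‖ ^ 2 :=
  calc ⟪x, y⟫ ≤ ‖x‖ * ‖y‖ := real_inner_le_norm x y
    _ < ‖y‖ * ‖y‖ := mul_lt_mul_of_pos_right h ((norm_nonneg x).trans_lt h)
    _ = ‖y‖ ^ 2 := (sq ‖y‖).symm

theorem rho_min_implies_condition_general
    {E : Type*} [NormedAddCommGroup E] [InnerProductSpace ℝ E]
    (Ac : Set E)
    (hpointed : (0 : E) ∉ Ac)
    (aco : E) (haco_mem : aco ∈ Ac)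
    (haco_min : ∀ x ∈ Ac, ‖aco‖ ≤ ‖x‖)
    (dA : ℝ) (hdA : dA = ‖aco‖)
    (b : E) (ρ : ℝ) (hρ : ρ > ‖b‖ / dA)
    (bρ : E) (hbρ_mem : bρ ∈ ρ • Ac) :
    ‖bρ‖ > ‖b‖ ∧ ‖bρ‖ ^ 2 > ⟪b, bρ⟫ := by
  subst hdA
  have hdA_pos : 0 < ‖aco‖ := norm_pos_iff.mpr fun h ↦ hpointed (h ▸ haco_mem)
  have hρ_pos : 0 < ρ := (div_nonneg (norm_nonneg b) hdA_pos.le).trans_lt hρ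
  have hb_norm : ‖b‖ < ‖bρ‖ :=
    calc ‖b‖ < ρ * ‖aco‖ := (div_lt_iff₀ hdA_pos).mp hρ
      _ = ‖ρ‖ * ‖aco‖ := by rw [Real.norm_of_nonneg hρ_pos.le]
      _ ≤ ‖bρ‖ := mul_le_norm_of_mem_smul_set haco_min hbρ_mem
  exact ⟨hb_norm, real_inner_lt_norm_sq_of_norm_lt hb_norm⟩

/-- If the cone is pointed (`0 ∉ Ac`) and `ρ > ‖b‖ / d_A` where `d_A` is the least norm
over the polytope `Ac`, then the projection `bρ` of `b` onto `ρ • Ac` satisfies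
`‖bρ‖ > ‖b‖` and `‖bρ‖² > ⟪b, bρ⟫`, i.e. the hypothesis of Theorem 1 holds. -/
theorem rho_min_implies_condition
    {E : Type*} [NormedAddCommGroup E] [InnerProductSpace ℝ E] [FiniteDimensional ℝ E]
    {m : ℕ} (a : Fin m → E)
    (Ac : Set E) (hAc : Ac = convexHull ℝ (Set.range a))
    (hpointed : (0 : E) ∉ Ac)
    (aco : E) (haco_mem : aco ∈ Ac)
    (haco_min : ∀ x ∈ Ac, ‖aco‖ ≤ ‖x‖)
    (dA : ℝ) (hdA : dA = ‖aco‖)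
    (b : E) (ρ : ℝ) (hρ : ρ > ‖b‖ / dA)
    (bρ : E) (hbρ_mem : bρ ∈ ρ • Ac)
    (hbρ_min : ∀ x ∈ ρ • Ac, ‖bρ - b‖ ≤ ‖x - b‖) :
    ‖bρ‖ > ‖b‖ ∧ ‖bρ‖ ^ 2 > ⟪b, bρ⟫ :=
  rho_min_implies_condition_general Ac hpointed aco haco_mem haco_min dA hdA b ρ hρ bρ hbρ_mem
end

section
/- Let E be a finite-dimensional real inner product space, let a^1,…,a^m ∈ E be a finite family of generators with convex hull A_c = co{a^1,…,a^m} and conical hull K(A) = {∑_{i=1}^m u_i a^i : u_i ≥ 0}, and assume 0 ∉ A_c. Let a^{co} ∈ A_c satisfy ‖a^{co}‖ ≤ ‖x‖ for all x ∈ A_c and set d_A = ‖a^{co}‖. Let b ∈ E, let ρ > ‖b‖/d_A, suppose b^K ∈ K(A) satisfies ‖b^K − b‖ ≤ ‖x − b‖ for all x ∈ K(A), and suppose b^{co} ∈ co({0} ∪ ρA_c) satisfies ‖b^{co} − b‖ ≤ ‖x − b‖ for all x ∈ co({0} ∪ ρA_c). Then b^K = b^{co}. -/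
open scoped RealInnerProductSpace Pointwise

/-!
Since `K(A)` is convex and contains `0`, the projection `b^K` satisfies `‖b^K‖ ≤ ‖b‖`.
Writing `b^K = t • y` with `t > 0` and `y ∈ A_c` gives `t d_A ≤ t ‖y‖ = ‖b^K‖ ≤ ‖b‖ < ρ d_A`,
so `t < ρ` and `b^K` lies on the segment from `0` to `ρ y`, inside the truncated cone
`T ⊆ K(A)`. Hence `b^K` also minimizes the distance to `b` on `T`, and nearest points in a
convex set are unique.
-/

open Set

section NearestPoint

variable {F : Type*} [NormedAddCommGroup F] [InnerProductSpace ℝ F] {S : Set F} {b v w : F}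

theorem real_inner_sub_sub_nonpos_of_isMinOn (hS : Convex ℝ S) (hv : v ∈ S)
    (hmin : IsMinOn (‖· - b‖) S v) {x : F} (hx : x ∈ S) : ⟪b - v, x - v⟫ ≤ 0 := by
  have : Nonempty S := ⟨⟨v, hv⟩⟩
  have hinf : ‖b - v‖ = ⨅ y : S, ‖b - y‖ := by
    refine le_antisymm (le_ciInf fun y => ?_) (ciInf_le ⟨0, ?_⟩ (⟨v, hv⟩ : S))
    · rw [norm_sub_rev b, norm_sub_rev b]
      exact hmin y.2
    · rintro _ ⟨y, rfl⟩
      exact norm_nonneg _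
  exact (norm_eq_iInf_iff_real_inner_le_zero hS hv).1 hinf x hx

theorem eq_of_isMinOn_norm_sub (hS : Convex ℝ S) (hv : v ∈ S) (hw : w ∈ S)
    (hvmin : IsMinOn (‖· - b‖) S v) (hwmin : IsMinOn (‖· - b‖) S w) : v = w := by
  have hvw := real_inner_sub_sub_nonpos_of_isMinOn hS hv hvmin hw
  have hwv := real_inner_sub_sub_nonpos_of_isMinOn hS hw hwmin hv
  have : ⟪w - v, w - v⟫ = ⟪b - v, w - v⟫ + ⟪b - w, v - w⟫ := by
    rw [← neg_sub w v, inner_neg_right, ← sub_eq_add_neg, ← inner_sub_left, sub_sub_sub_cancel_left]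
  exact (sub_eq_zero.1 (real_inner_self_nonpos.1 (by linarith))).symm

theorem norm_le_of_isMinOn_norm_sub (hS : Convex ℝ S) (h0 : (0 : F) ∈ S) (hv : v ∈ S)
    (hmin : IsMinOn (‖· - b‖) S v) : ‖v‖ ≤ ‖b‖ := by
  have h := real_inner_sub_sub_nonpos_of_isMinOn hS hv hmin h0
  rw [zero_sub, inner_neg_right, inner_sub_left, real_inner_self_eq_norm_sq] at h
  nlinarith [real_inner_le_norm b v, norm_nonneg v, norm_nonneg b]

end NearestPoint

section Cone

variable {E : Type*} [AddCommGroup E] [Module ℝ E]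

theorem PointedCone.mem_hull_range_iff {ι : Type*} [Fintype ι] {a : ι → E} {x : E} :
    x ∈ PointedCone.hull ℝ (range a) ↔ ∃ u : ι → ℝ, (∀ i, 0 ≤ u i) ∧ x = ∑ i, u i • a i := by
  rw [Submodule.mem_span_range_iff_exists_fun]
  constructor
  · rintro ⟨c, rfl⟩
    exact ⟨fun i => c i, fun i => (c i).2, rfl⟩
  · rintro ⟨u, hu, rfl⟩
    exact ⟨fun i => ⟨u i, hu i⟩, rfl⟩

theorem PointedCone.eq_zero_or_exists_smul_mem_convexHull {ι : Type*} [Fintype ι] {a : ι → E}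
    {x : E} (hx : x ∈ PointedCone.hull ℝ (range a)) :
    x = 0 ∨ ∃ t : ℝ, 0 < t ∧ ∃ y ∈ convexHull ℝ (range a), x = t • y := by
  obtain ⟨u, hu, rfl⟩ := PointedCone.mem_hull_range_iff.1 hx
  rcases (Finset.sum_nonneg fun i _ => hu i).eq_or_lt' with hsum | hsum
  · left
    rw [Finset.sum_eq_zero_iff_of_nonneg fun i _ => hu i] at hsum
    exact Finset.sum_eq_zero fun i hi => by rw [hsum i hi, zero_smul]
  · refine .inr ⟨_, hsum, Finset.univ.centerMass u a,
      Finset.univ.centerMass_mem_convexHull (fun i _ => hu i) hsum fun i _ => mem_range_self i, ?_⟩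
    rw [Finset.centerMass, smul_smul, mul_inv_cancel₀ hsum.ne', one_smul]

theorem convexHull_zero_union_smul_convexHull_subset_hull {s : Set E} {ρ : ℝ} (hρ : 0 ≤ ρ) :
    convexHull ℝ ({0} ∪ ρ • convexHull ℝ s) ⊆ PointedCone.hull ℝ s := by
  have hs : convexHull ℝ s ⊆ PointedCone.hull ℝ s :=
    convexHull_min PointedCone.subset_hull (PointedCone.convex _)
  refine convexHull_min (union_subset ?_ ?_) (PointedCone.convex _)
  · exact singleton_subset_iff.2 (zero_mem _)
  · rintro _ ⟨y, hy, rfl⟩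
    exact PointedCone.smul_mem _ hρ (hs hy)

theorem smul_mem_convexHull_zero_union_smul {s : Set E} {y : E} (hy : y ∈ s) {t ρ : ℝ}
    (hρ : 0 < ρ) (ht : 0 ≤ t) (htρ : t ≤ ρ) : t • y ∈ convexHull ℝ ({0} ∪ ρ • s) := by
  have h := (convex_convexHull ℝ ({0} ∪ ρ • s)).smul_mem_of_zero_mem
    (subset_convexHull ℝ _ (.inl rfl)) (subset_convexHull ℝ _ (.inr (smul_mem_smul_set hy)))
    ⟨div_nonneg ht hρ.le, (div_le_one hρ).2 htρ⟩
  rwa [smul_smul, div_mul_cancel₀ _ hρ.ne'] at h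

end Cone

theorem mem_convexHull_zero_union_smul_of_norm_lt {E ι : Type*} [NormedAddCommGroup E]
    [InnerProductSpace ℝ E] [Fintype ι] {a : ι → E} {x : E}
    (hx : x ∈ PointedCone.hull ℝ (range a)) {d ρ : ℝ} (hρ : 0 ≤ ρ)
    (hd : ∀ y ∈ convexHull ℝ (range a), d ≤ ‖y‖) (hxd : ‖x‖ < ρ * d) :
    x ∈ convexHull ℝ ({0} ∪ ρ • convexHull ℝ (range a)) := by
  rcases PointedCone.eq_zero_or_exists_smul_mem_convexHull hx with rfl | ⟨t, ht, y, hy, rfl⟩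
  · exact subset_convexHull ℝ _ (.inl rfl)
  rw [norm_smul, Real.norm_of_nonneg ht.le] at hxd
  have htρ : t < ρ := by nlinarith [hd y hy, norm_nonneg y]
  exact smul_mem_convexHull_zero_union_smul hy (ht.trans htρ) ht.le htρ.le

theorem rho_min_cone_truncation_equiv_general
    {E : Type*} [NormedAddCommGroup E] [InnerProductSpace ℝ E]
    {m : ℕ} (a : Fin m → E)
    (Ac : Set E) (hAc : Ac = convexHull ℝ (Set.range a))
    (K : Set E)
    (hK : K = {x : E | ∃ u : Fin m → ℝ, (∀ i, 0 ≤ u i) ∧ x = ∑ i, u i • a i})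
    (hpointed : (0 : E) ∉ Ac)
    (aco : E) (haco_mem : aco ∈ Ac)
    (haco_min : ∀ x ∈ Ac, ‖aco‖ ≤ ‖x‖)
    (dA : ℝ) (hdA : dA = ‖aco‖)
    (b : E) (ρ : ℝ) (hρ : ρ > ‖b‖ / dA)
    (bK : E) (hbK_mem : bK ∈ K)
    (hbK_min : ∀ x ∈ K, ‖bK - b‖ ≤ ‖x - b‖)
    (bco : E) (hbco_mem : bco ∈ convexHull ℝ ({(0 : E)} ∪ ρ • Ac))
    (hbco_min : ∀ x ∈ convexHull ℝ ({(0 : E)} ∪ ρ • Ac), ‖bco - b‖ ≤ ‖x - b‖) :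
    bK = bco := by
  have hK : K = PointedCone.hull ℝ (range a) :=
    hK.trans (Set.ext fun _ => PointedCone.mem_hull_range_iff.symm)
  subst hAc hK hdA
  have hdA : 0 < ‖aco‖ := norm_pos_iff.2 fun h => hpointed (h ▸ haco_mem)
  have hρ0 : 0 ≤ ρ := (div_nonneg (norm_nonneg b) hdA.le).trans hρ.le
  have hbK_le : ‖bK‖ ≤ ‖b‖ :=
    norm_le_of_isMinOn_norm_sub (PointedCone.convex _) (zero_mem _) hbK_mem hbK_min
  have hbK_trunc : bK ∈ convexHull ℝ ({0} ∪ ρ • convexHull ℝ (range a)) :=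
    mem_convexHull_zero_union_smul_of_norm_lt hbK_mem hρ0 haco_min
      (hbK_le.trans_lt ((div_lt_iff₀ hdA).1 hρ))
  exact eq_of_isMinOn_norm_sub (convex_convexHull ℝ _) hbK_trunc hbco_mem
    (IsMinOn.on_subset hbK_min (convexHull_zero_union_smul_convexHull_subset_hull hρ0)) hbco_min

/-- Direct demonstration: if the cone is pointed (`0 ∉ Ac`) and `ρ > ‖b‖ / d_A`,
then the projection of `b` onto the cone `K(A)` coincides with the projection of `b`
onto the truncated cone `co({0} ∪ ρ • Ac)`. -/
theorem rho_min_cone_truncation_equiv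
    {E : Type*} [NormedAddCommGroup E] [InnerProductSpace ℝ E] [FiniteDimensional ℝ E]
    {m : ℕ} (a : Fin m → E)
    (Ac : Set E) (hAc : Ac = convexHull ℝ (Set.range a))
    (K : Set E)
    (hK : K = {x : E | ∃ u : Fin m → ℝ, (∀ i, 0 ≤ u i) ∧ x = ∑ i, u i • a i})
    (hpointed : (0 : E) ∉ Ac)
    (aco : E) (haco_mem : aco ∈ Ac)
    (haco_min : ∀ x ∈ Ac, ‖aco‖ ≤ ‖x‖)
    (dA : ℝ) (hdA : dA = ‖aco‖)
    (b : E) (ρ : ℝ) (hρ : ρ > ‖b‖ / dA)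
    (bK : E) (hbK_mem : bK ∈ K)
    (hbK_min : ∀ x ∈ K, ‖bK - b‖ ≤ ‖x - b‖)
    (bco : E) (hbco_mem : bco ∈ convexHull ℝ ({(0 : E)} ∪ ρ • Ac))
    (hbco_min : ∀ x ∈ convexHull ℝ ({(0 : E)} ∪ ρ • Ac), ‖bco - b‖ ≤ ‖x - b‖) :
    bK = bco :=
  rho_min_cone_truncation_equiv_general a Ac hAc K hK hpointed aco haco_mem haco_min dA hdA b ρ hρ
    bK hbK_mem hbK_min bco hbco_mem hbco_min
end

section
/- Let E be a finite-dimensional real inner product space, let a^1,…,a^m ∈ E be a finite family of generators with convex hull A_c = co{a^1,…,a^m} and conical hull K(A) = {∑_{i=1}^m u_i a^i : u_i ≥ 0}. Let b ∈ E, ρ > 0, and suppose b^ρ ∈ ρA_c satisfies ‖b^ρ − b‖ ≤ ‖x − b‖ for all x ∈ ρA_c. Define Λ(x) = ⟨x − b^ρ, b^ρ − b⟩. If ‖b^ρ‖² > ⟨b, b^ρ⟩, then every x ∈ K(A) with Λ(x) ≤ 0 belongs to co({0} ∪ ρA_c); that is, K(A) ∩ {x : Λ(x) ≤ 0} ⊆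 co({0} ∪ ρA_c). -/
/-!
Write `x ∈ K(A)` as `s • z` with `z ∈ A_c` and `s = ∑ uᵢ`. The affine function
`Λ(y) = ⟪y - bρ, bρ - b⟫` is nonnegative on `ρ • A_c` (variational inequality of the projection)
and negative at `0`. If `Λ(x) ≤ 0`, then `Λ < 0` on the half-open segment `[0, x)`, which
therefore misses `ρ • A_c ∋ (ρ / s) • x`; hence `s ≤ ρ` and `x` lies on the segment `[0, ρ • z]`.
-/

open scoped RealInnerProductSpace Pointwise

section InnerProduct

variable {E : Type*} [NormedAddCommGroup E] [InnerProductSpace ℝ E]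

theorem inner_sub_nonneg_of_forall_norm_sub_le {C : Set E} (hC : Convex ℝ C) {b p : E}
    (hp : p ∈ C) (hmin : ∀ y ∈ C, ‖p - b‖ ≤ ‖y - b‖) {x : E} (hx : x ∈ C) :
    0 ≤ ⟪x - p, p - b⟫ := by
  have : Nonempty C := ⟨⟨p, hp⟩⟩
  have hinf : ‖b - p‖ = ⨅ w : C, ‖b - w‖ :=
    le_antisymm (le_ciInf fun w => by simpa only [norm_sub_rev b] using hmin w w.2)
      (ciInf_le (f := fun w : C => ‖b - w‖) ⟨0, Set.forall_mem_range.2 fun _ => norm_nonneg _⟩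
        ⟨p, hp⟩)
  have hle := (norm_eq_iInf_iff_real_inner_le_zero hC hp).1 hinf x hx
  have hflip : ⟪x - p, p - b⟫ = -⟪b - p, x - p⟫ := by
    rw [real_inner_comm, ← inner_neg_left, neg_sub]
  linarith

theorem smul_notMem_of_inner_sub_nonpos {C : Set E} {p v x : E}
    (hC : ∀ y ∈ C, 0 ≤ ⟪y - p, v⟫) (h0 : ⟪-p, v⟫ < 0) (hx : ⟪x - p, v⟫ ≤ 0)
    {t : ℝ} (ht₀ : 0 ≤ t) (ht₁ : t < 1) : t • x ∉ C := by
  intro htx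
  have hsplit : ⟪t • x - p, v⟫ = t * ⟪x - p, v⟫ + (1 - t) * ⟪-p, v⟫ := by
    simp only [inner_sub_left, inner_neg_left, real_inner_smul_left]
    ring
  linarith [hC _ htx, mul_nonneg ht₀ (neg_nonneg.2 hx), mul_pos (sub_pos.2 ht₁) (neg_pos.2 h0)]

end InnerProduct

section Convex

variable {𝕜 E : Type*} [Field 𝕜] [AddCommGroup E] [Module 𝕜 E]

theorem Finset.sum_smul_eq_sum_smul_centerMass {ι : Type*} (s : Finset ι) (u : ι → 𝕜) (a : ι → E)
    (hu : ∑ i ∈ s, u i ≠ 0) : ∑ i ∈ s, u i • a i = (∑ i ∈ s, u i) • s.centerMass u a := by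
  rw [Finset.centerMass, smul_smul, mul_inv_cancel₀ hu, one_smul]

theorem smul_mem_convexHull_zero_union [LinearOrder 𝕜] [IsStrictOrderedRing 𝕜] {T : Set E}
    {y : E} (hy : y ∈ T) {t : 𝕜} (ht : t ∈ Set.Icc 0 1) : t • y ∈ convexHull 𝕜 ({(0 : E)} ∪ T) :=
  (convex_convexHull 𝕜 _).smul_mem_of_zero_mem
    (subset_convexHull 𝕜 ({0} ∪ T) (Or.inl rfl)) (subset_convexHull 𝕜 ({0} ∪ T) (Or.inr hy)) ht

end Convex

theorem cone_cap_subset_truncation_general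
    {E : Type*} [NormedAddCommGroup E] [InnerProductSpace ℝ E]
    {m : ℕ} (a : Fin m → E)
    (Ac : Set E) (hAc : Ac = convexHull ℝ (Set.range a))
    (K : Set E)
    (hK : K = {x : E | ∃ u : Fin m → ℝ, (∀ i, 0 ≤ u i) ∧ x = ∑ i, u i • a i})
    (b : E) (ρ : ℝ) (hρ : 0 < ρ)
    (bρ : E) (hbρ_mem : bρ ∈ ρ • Ac)
    (hbρ_min : ∀ x ∈ ρ • Ac, ‖bρ - b‖ ≤ ‖x - b‖)
    (hcond : ‖bρ‖ ^ 2 > ⟪b, bρ⟫) :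
    K ∩ {x : E | ⟪x - bρ, bρ - b⟫ ≤ 0} ⊆ convexHull ℝ ({(0 : E)} ∪ ρ • Ac) := by
  subst hAc hK
  have hΛ_nonneg : ∀ y ∈ ρ • convexHull ℝ (Set.range a), 0 ≤ ⟪y - bρ, bρ - b⟫ := fun _ hy =>
    inner_sub_nonneg_of_forall_norm_sub_le ((convex_convexHull ℝ _).smul ρ) hbρ_mem hbρ_min hy
  have hΛ_zero : ⟪-bρ, bρ - b⟫ < 0 := by
    rw [inner_neg_left, inner_sub_right, real_inner_self_eq_norm_sq, real_inner_comm]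
    linarith
  rintro _ ⟨⟨u, hu, rfl⟩, hΛx⟩
  rcases (Finset.sum_nonneg fun i _ => hu i : 0 ≤ ∑ i, u i).eq_or_lt with hs | hs
  · have hu_zero := (Finset.sum_eq_zero_iff_of_nonneg fun i _ => hu i).1 hs.symm
    rw [Finset.sum_eq_zero fun i hi => by rw [hu_zero i hi, zero_smul]]
    exact subset_convexHull ℝ _ (Or.inl rfl)
  have hz : Finset.univ.centerMass u a ∈ convexHull ℝ (Set.range a) :=
    Finset.univ.centerMass_mem_convexHull (fun i _ => hu i) hs fun i _ => Set.mem_range_self i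
  rw [Finset.sum_smul_eq_sum_smul_centerMass _ _ _ hs.ne'] at hΛx ⊢
  set s := ∑ i, u i
  have hsρ : s ≤ ρ := by
    by_contra! hρs
    refine smul_notMem_of_inner_sub_nonpos hΛ_nonneg hΛ_zero hΛx (div_pos hρ hs).le
      ((div_lt_one hs).2 hρs) ?_
    rw [smul_smul, div_mul_cancel₀ _ hs.ne']
    exact Set.smul_mem_smul_set hz
  rw [← div_mul_cancel₀ s hρ.ne', ← smul_smul]
  exact smul_mem_convexHull_zero_union (Set.smul_mem_smul_set hz)
    ⟨div_nonneg hs.le hρ.le, (div_le_one hρ).2 hsρ⟩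

/-- The final step in the proof of Theorem 1: if the projection `bρ` of `b` onto the
scaled polytope `ρ • Ac` satisfies `‖bρ‖² > ⟪b, bρ⟫`, then the part of the cone `K(A)`
on which `Λ(x) = ⟪x - bρ, bρ - b⟫` is nonpositive is contained in the truncated cone
`co({0} ∪ ρ • Ac)`. -/
theorem cone_cap_subset_truncation
    {E : Type*} [NormedAddCommGroup E] [InnerProductSpace ℝ E] [FiniteDimensional ℝ E]
    {m : ℕ} (a : Fin m → E)
    (Ac : Set E) (hAc : Ac = convexHull ℝ (Set.range a))
    (K : Set E)
    (hK : K = {x : E | ∃ u : Fin m → ℝ, (∀ i, 0 ≤ u i) ∧ x = ∑ i, u i • a i})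
    (b : E) (ρ : ℝ) (hρ : 0 < ρ)
    (bρ : E) (hbρ_mem : bρ ∈ ρ • Ac)
    (hbρ_min : ∀ x ∈ ρ • Ac, ‖bρ - b‖ ≤ ‖x - b‖)
    (hcond : ‖bρ‖ ^ 2 > ⟪b, bρ⟫) :
    K ∩ {x : E | ⟪x - bρ, bρ - b⟫ ≤ 0} ⊆ convexHull ℝ ({(0 : E)} ∪ ρ • Ac) :=
  cone_cap_subset_truncation_general a Ac hAc K hK b ρ hρ bρ hbρ_mem hbρ_min hcond
end
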